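/- Let x₁, x₂ be Boolean independent and g = a x₁x₂ + b x₂x₁. With d = ab β₂(x₁)β₂(x₂), α₁ = (a+b)β₁(x₁)β₁(x₂), α₂ = ab(β₁(x₁)²β₂(x₂) + β₁(x₂)²β₂(x₁)), and ω = √(α₁² + 4(d + α₂)), the moments of g are m_k(g) = (1/ω)((α₁+ω)/2)^{k−1}(α₁(α₁+ω)/2 + α₂) − (1/ω)((α₁−ω)/2)^{k−1}(α₁(α₁−ω)/2 + α₂) for all k ≥ 1; equivalently, g has the two-atom distribution ((α₁θ₁+α₂)/(ωθ₁)) δ_{θ₁} − ((α₁θ₂+α₂)/(ωθ₂)) δ_{θ₂} with θ₁ = (α₁+ω)/2, θ₂ = (α₁−ω)/2. -/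

import Mathlib

open Finset

/-- `x₁, x₂` are Boolean independent in `(A, φ)`: `φ` factorizes over alternating
words from the non-unital subalgebras generated by `x₁` resp. `x₂`. -/
def BoolPair {A : Type*} [Ring A] [Algebra ℂ A] (φ : A →ₗ[ℂ] ℂ) (x₁ x₂ : A) : Prop :=
  ∀ (n : ℕ) (y : Fin n → A) (idx : Fin n → Fin 2),
    (∀ (i : Fin n) (h : i.val + 1 < n), idx i ≠ idx ⟨i.val + 1, h⟩) →
    (∀ i, y i ∈ NonUnitalAlgebra.adjoin ℂ ({![x₁, x₂] (idx i)} : Set A)) →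
    φ (List.ofFn y).prod = ∏ i, φ (y i)

/-!
Expanding `g ^ n` gives words in the blocks `x₁x₂` and `x₂x₁`. Between two equal blocks the
letters stay separate, between two different ones they merge into `x₂²` or `x₁²`; Boolean
independence then makes `φ` multiplicative over the resulting alternating word, so the moments
of `g` are governed by the `2 × 2` transfer matrix of adjacent blocks, of trace `α₁` and
determinant `-(d + α₂)`. By Cayley–Hamilton, `m_{k+2} = α₁ m_{k+1} + (d + α₂) m_k`, and the
closed form is the solution with `m₁ = α₁`, `m₂ = α₁² + α₂`: its ratios `(α₁ ± ω) / 2` are the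
roots of `θ² = α₁ θ + d + α₂`.
-/

section Boolean

variable {A : Type*} [Ring A] [Algebra ℂ A] {x₁ x₂ : A}

abbrev letters (x₁ x₂ : A) (i : Fin 2) : NonUnitalSubalgebra ℂ A :=
  NonUnitalAlgebra.adjoin ℂ {![x₁, x₂] i}

def IsAlternatingWord (x₁ x₂ : A) (L : List (Fin 2 × A)) : Prop :=
  L.IsChain (fun u v => u.1 ≠ v.1) ∧ ∀ u ∈ L, u.2 ∈ letters x₁ x₂ u.1

theorem BoolPair.map_prod_of_isAlternatingWord {φ : A →ₗ[ℂ] ℂ} (hbool : BoolPair φ x₁ x₂)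
    {L : List (Fin 2 × A)} (hL : IsAlternatingWord x₁ x₂ L) :
    φ (L.map Prod.snd).prod = (L.map fun u => φ u.2).prod := by
  have halt : (List.ofFn fun k : Fin L.length => L[(k : ℕ)].1).IsChain (· ≠ ·) := by
    rw [List.ofFn_getElem_eq_map, List.isChain_map]
    exact hL.1
  have h := hbool L.length (fun k => L[(k : ℕ)].2) (fun k => L[(k : ℕ)].1)
    (fun k => List.isChain_ofFn.mp halt k) (fun k => hL.2 _ (List.getElem_mem _))
  rwa [List.ofFn_getElem_eq_map, ← List.prod_ofFn,
    List.ofFn_getElem_eq_map L fun u => φ u.2] at h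

/-- `w` is the product of an alternating word whose first letter, if any, is not of colour `i`,
so that multiplying `w` on the left by a letter of colour `i` keeps the word alternating. -/
def IsAlternatingProd (x₁ x₂ : A) (i : Fin 2) (w : A) : Prop :=
  ∃ L : List (Fin 2 × A),
    IsAlternatingWord x₁ x₂ L ∧ (∀ u ∈ L.head?, u.1 ≠ i) ∧ (L.map Prod.snd).prod = w

theorem isAlternatingProd_one (i : Fin 2) : IsAlternatingProd x₁ x₂ i 1 :=
  ⟨[], ⟨List.isChain_nil, by simp⟩, by simp, by simp⟩

theorem IsAlternatingWord.cons {L : List (Fin 2 × A)} {i : Fin 2} {y : A}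
    (hL : IsAlternatingWord x₁ x₂ L) (hy : y ∈ letters x₁ x₂ i) (hi : ∀ u ∈ L.head?, u.1 ≠ i) :
    IsAlternatingWord x₁ x₂ ((i, y) :: L) :=
  ⟨List.isChain_cons.mpr ⟨fun u hu => (hi u hu).symm, hL.1⟩, List.forall_mem_cons.mpr ⟨hy, hL.2⟩⟩

theorem BoolPair.map_mul_of_isAlternatingProd {φ : A →ₗ[ℂ] ℂ} (hbool : BoolPair φ x₁ x₂)
    {i : Fin 2} {y w : A} (hy : y ∈ letters x₁ x₂ i) (hw : IsAlternatingProd x₁ x₂ i w) :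
    φ (y * w) = φ y * φ w := by
  obtain ⟨L, hL, hi, rfl⟩ := hw
  have h := hbool.map_prod_of_isAlternatingWord (hL.cons hy hi)
  rw [List.map_cons, List.prod_cons] at h
  simpa [hbool.map_prod_of_isAlternatingWord hL] using h

theorem IsAlternatingProd.mul_left {i j j' : Fin 2} {y w : A} (hy : y ∈ letters x₁ x₂ i)
    (hw : IsAlternatingProd x₁ x₂ j w) (hj' : j' ≠ i) : IsAlternatingProd x₁ x₂ j' (y * w) := by
  obtain ⟨L, hL, -, rfl⟩ := hw
  match L, hL with
  | [], hL => exact ⟨[(i, y)], hL.cons hy (by simp), by simpa using hj'.symm, by simp⟩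
  | (c, z) :: t, hL =>
    by_cases hc : c = i
    · subst hc
      obtain ⟨hz, ht⟩ := List.forall_mem_cons.mp hL.2
      exact ⟨(c, y * z) :: t,
        ⟨List.isChain_cons.mpr (List.isChain_cons.mp hL.1),
          List.forall_mem_cons.mpr ⟨mul_mem hy hz, ht⟩⟩,
        by simpa using hj'.symm, by simp [mul_assoc]⟩
    · exact ⟨(i, y) :: (c, z) :: t, hL.cons hy (by simpa using hc), by simpa using hj'.symm,
        by simp⟩

end Boolean

section Moments

variable {A : Type*} [Ring A] [Algebra ℂ A] (φ : A →ₗ[ℂ] ℂ) (x₁ x₂ : A) (a b : ℂ)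

/-- `(blockWeights φ x₁ x₂ a b n).1` (resp. `.2`) is the total weight of the words of `g ^ (n + 1)`
ending in the block `x₁x₂` (resp. `x₂x₁`), with that final letter `x₂` (resp. `x₁`) removed. -/
def blockWeights : ℕ → ℂ × ℂ
  | 0 => (a * φ x₁, b * φ x₂)
  | n + 1 =>
    (a * (φ x₁ * φ x₂ * (blockWeights n).1 + φ (x₁ ^ 2) * (blockWeights n).2),
      b * (φ (x₂ ^ 2) * (blockWeights n).1 + φ x₁ * φ x₂ * (blockWeights n).2))

variable {φ x₁ x₂}

theorem smul_mul_add_smul_mul_mul (v : A) :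
    (a • (x₁ * x₂) + b • (x₂ * x₁)) * v = a • (x₁ * (x₂ * v)) + b • (x₂ * (x₁ * v)) := by
  simp only [add_mul, smul_mul_assoc, mul_assoc]

theorem BoolPair.map_pow_succ_mul (hbool : BoolPair φ x₁ x₂) (n : ℕ) {j : Fin 2} {w : A}
    (hw : IsAlternatingProd x₁ x₂ j w) :
    φ ((a • (x₁ * x₂) + b • (x₂ * x₁)) ^ (n + 1) * w)
      = (blockWeights φ x₁ x₂ a b n).1 * φ (x₂ * w)
        + (blockWeights φ x₁ x₂ a b n).2 * φ (x₁ * w) := by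
  have hx₁ : x₁ ∈ letters x₁ x₂ 0 := NonUnitalAlgebra.self_mem_adjoin_singleton ℂ x₁
  have hx₂ : x₂ ∈ letters x₁ x₂ 1 := NonUnitalAlgebra.self_mem_adjoin_singleton ℂ x₂
  have hw₂ : IsAlternatingProd x₁ x₂ 0 (x₂ * w) := hw.mul_left hx₂ (by decide)
  have hw₁ : IsAlternatingProd x₁ x₂ 1 (x₁ * w) := hw.mul_left hx₁ (by decide)
  have h₁₂ : φ (x₁ * (x₂ * w)) = φ x₁ * φ (x₂ * w) :=
    hbool.map_mul_of_isAlternatingProd hx₁ hw₂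
  have h₂₁ : φ (x₂ * (x₁ * w)) = φ x₂ * φ (x₁ * w) :=
    hbool.map_mul_of_isAlternatingProd hx₂ hw₁
  cases n with
  | zero =>
    rw [zero_add, pow_one, smul_mul_add_smul_mul_mul, map_add, map_smul, map_smul, h₁₂, h₂₁,
      blockWeights, smul_eq_mul, smul_eq_mul]
    ring
  | succ n =>
    have hw₁₂ : IsAlternatingProd x₁ x₂ 1 (x₁ * (x₂ * w)) := hw₂.mul_left hx₁ (by decide)
    have hw₂₁ : IsAlternatingProd x₁ x₂ 0 (x₂ * (x₁ * w)) := hw₁.mul_left hx₂ (by decide)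
    have h₁₁ : φ (x₁ * (x₁ * (x₂ * w))) = φ (x₁ ^ 2) * φ (x₂ * w) := by
      rw [← mul_assoc, ← sq]
      exact hbool.map_mul_of_isAlternatingProd (sq x₁ ▸ mul_mem hx₁ hx₁) hw₂
    have h₂₂ : φ (x₂ * (x₂ * (x₁ * w))) = φ (x₂ ^ 2) * φ (x₁ * w) := by
      rw [← mul_assoc, ← sq]
      exact hbool.map_mul_of_isAlternatingProd (sq x₂ ▸ mul_mem hx₂ hx₂) hw₁
    have h₂₁₂ : φ (x₂ * (x₁ * (x₂ * w))) = φ x₂ * φ (x₁ * (x₂ * w)) :=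
      hbool.map_mul_of_isAlternatingProd hx₂ hw₁₂
    have h₁₂₁ : φ (x₁ * (x₂ * (x₁ * w))) = φ x₁ * φ (x₂ * (x₁ * w)) :=
      hbool.map_mul_of_isAlternatingProd hx₁ hw₂₁
    rw [pow_succ, mul_assoc, smul_mul_add_smul_mul_mul, mul_add, mul_smul_comm, mul_smul_comm,
      map_add, map_smul, map_smul, hbool.map_pow_succ_mul n hw₁₂, hbool.map_pow_succ_mul n hw₂₁,
      h₁₁, h₂₂, h₂₁₂, h₁₂₁, h₁₂, h₂₁, blockWeights, smul_eq_mul, smul_eq_mul]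
    ring

theorem BoolPair.map_pow_succ (hbool : BoolPair φ x₁ x₂) (n : ℕ) :
    φ ((a • (x₁ * x₂) + b • (x₂ * x₁)) ^ (n + 1))
      = (blockWeights φ x₁ x₂ a b n).1 * φ x₂ + (blockWeights φ x₁ x₂ a b n).2 * φ x₁ := by
  simpa using hbool.map_pow_succ_mul a b n (isAlternatingProd_one 0)

theorem BoolPair.map_pow_add_three (hbool : BoolPair φ x₁ x₂) (n : ℕ) :
    φ ((a • (x₁ * x₂) + b • (x₂ * x₁)) ^ (n + 3))
      = (a + b) * φ x₁ * φ x₂ * φ ((a • (x₁ * x₂) + b • (x₂ * x₁)) ^ (n + 2))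
        + a * b * (φ (x₁ ^ 2) * φ (x₂ ^ 2) - (φ x₁ * φ x₂) ^ 2)
          * φ ((a • (x₁ * x₂) + b • (x₂ * x₁)) ^ (n + 1)) := by
  simp only [hbool.map_pow_succ, blockWeights]
  ring

end Moments

/-- The moment of order `n + 1` (not `n`) of the two-atom law
`((α₁θ₁ + α₂) / (ωθ₁)) δ_{θ₁} - ((α₁θ₂ + α₂) / (ωθ₂)) δ_{θ₂}`, `θ₁,₂ = (α₁ ± ω) / 2`. -/
noncomputable def twoAtomMoment (α₁ α₂ ω : ℂ) (n : ℕ) : ℂ :=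
  1 / ω * ((α₁ + ω) / 2) ^ n * (α₁ * ((α₁ + ω) / 2) + α₂)
    - 1 / ω * ((α₁ - ω) / 2) ^ n * (α₁ * ((α₁ - ω) / 2) + α₂)

section TwoAtom

variable {α₁ α₂ ω : ℂ}

theorem twoAtomMoment_zero (hω : ω ≠ 0) : twoAtomMoment α₁ α₂ ω 0 = α₁ := by
  simp only [twoAtomMoment]
  field_simp
  ring

theorem twoAtomMoment_one (hω : ω ≠ 0) : twoAtomMoment α₁ α₂ ω 1 = α₁ ^ 2 + α₂ := by
  simp only [twoAtomMoment]
  field_simp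
  ring

theorem twoAtomMoment_add_two {c : ℂ} (hω : ω ^ 2 = α₁ ^ 2 + 4 * c) (n : ℕ) :
    twoAtomMoment α₁ α₂ ω (n + 2)
      = α₁ * twoAtomMoment α₁ α₂ ω (n + 1) + c * twoAtomMoment α₁ α₂ ω n := by
  unfold twoAtomMoment
  -- `(α₁ ± ω) / 2` are the roots of `θ ^ 2 = α₁ * θ + c`
  linear_combination (((α₁ + ω) / 2) ^ n * (α₁ * ((α₁ + ω) / 2) + α₂)
    - ((α₁ - ω) / 2) ^ n * (α₁ * ((α₁ - ω) / 2) + α₂)) / (4 * ω) * hω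

end TwoAtom

theorem eq_of_second_order_recurrence {R : Type*} {u v : ℕ → R} (f : R → R → R)
    (hu : ∀ n, u (n + 2) = f (u n) (u (n + 1))) (hv : ∀ n, v (n + 2) = f (v n) (v (n + 1)))
    (h₀ : u 0 = v 0) (h₁ : u 1 = v 1) : u = v := by
  funext n
  induction n using Nat.twoStepInduction with
  | zero => exact h₀
  | one => exact h₁
  | more n ih₀ ih₁ => rw [hu, hv, ih₀, ih₁]

theorem stmt17_general {A : Type*} [Ring A] [Algebra ℂ A]
    (φ : A →ₗ[ℂ] ℂ)
    (x₁ x₂ : A) (hbool : BoolPair φ x₁ x₂)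
    (a b : ℂ) (g : A) (hg : g = a • (x₁ * x₂) + b • (x₂ * x₁))
    (d α₁ α₂ ω : ℂ)
    (hd : d = a * b * (φ (x₁ ^ 2) - (φ x₁) ^ 2) * (φ (x₂ ^ 2) - (φ x₂) ^ 2))
    (hα₁ : α₁ = (a + b) * φ x₁ * φ x₂)
    (hα₂ : α₂ = a * b * ((φ x₁) ^ 2 * (φ (x₂ ^ 2) - (φ x₂) ^ 2)
        + (φ x₂) ^ 2 * (φ (x₁ ^ 2) - (φ x₁) ^ 2)))
    (hω : ω ^ 2 = α₁ ^ 2 + 4 * (d + α₂)) (hω0 : ω ≠ 0) :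
    ∀ k : ℕ, 1 ≤ k →
      φ (g ^ k)
        = 1 / ω * ((α₁ + ω) / 2) ^ (k - 1) * (α₁ * ((α₁ + ω) / 2) + α₂)
          - 1 / ω * ((α₁ - ω) / 2) ^ (k - 1) * (α₁ * ((α₁ - ω) / 2) + α₂) := by
  intro k hk
  obtain ⟨n, rfl⟩ := Nat.exists_eq_add_of_le' hk
  have hc : a * b * (φ (x₁ ^ 2) * φ (x₂ ^ 2) - (φ x₁ * φ x₂) ^ 2) = d + α₂ := by
    rw [hd, hα₂]; ring
  have hmoments : (fun n => φ (g ^ (n + 1))) = twoAtomMoment α₁ α₂ ω :=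
    eq_of_second_order_recurrence (fun u v => α₁ * v + (d + α₂) * u)
      (fun n => by simpa only [hg, hα₁, hc] using hbool.map_pow_add_three a b n)
      (twoAtomMoment_add_two hω)
      (by rw [twoAtomMoment_zero hω0, hg, hbool.map_pow_succ, hα₁, blockWeights]; ring)
      (by rw [twoAtomMoment_one hω0, hg, hbool.map_pow_succ, hα₁, hα₂, blockWeights,
        blockWeights]; ring)
  exact congrFun hmoments n

/-- For Boolean independent `x₁, x₂` and `g = a x₁x₂ + b x₂x₁`, with
`d = ab β₂(x₁)β₂(x₂)`, `α₁ = (a+b)β₁(x₁)β₁(x₂)`,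
`α₂ = ab(β₁(x₁)²β₂(x₂) + β₁(x₂)²β₂(x₁))` and `ω = √(α₁² + 4(d + α₂))` (nonzero),
the moments of `g` are
`m_k(g) = (1/ω)((α₁+ω)/2)^{k−1}(α₁(α₁+ω)/2 + α₂) − (1/ω)((α₁−ω)/2)^{k−1}(α₁(α₁−ω)/2 + α₂)`
for all `k ≥ 1` (equivalently, `g` has the stated two-atom distribution). -/
theorem stmt17 {A : Type*} [Ring A] [Algebra ℂ A]
    (φ : A →ₗ[ℂ] ℂ) (hφ1 : φ 1 = 1)
    (x₁ x₂ : A) (hbool : BoolPair φ x₁ x₂)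
    (a b : ℂ) (g : A) (hg : g = a • (x₁ * x₂) + b • (x₂ * x₁))
    (d α₁ α₂ ω : ℂ)
    (hd : d = a * b * (φ (x₁ ^ 2) - (φ x₁) ^ 2) * (φ (x₂ ^ 2) - (φ x₂) ^ 2))
    (hα₁ : α₁ = (a + b) * φ x₁ * φ x₂)
    (hα₂ : α₂ = a * b * ((φ x₁) ^ 2 * (φ (x₂ ^ 2) - (φ x₂) ^ 2)
        + (φ x₂) ^ 2 * (φ (x₁ ^ 2) - (φ x₁) ^ 2)))
    (hω : ω ^ 2 = α₁ ^ 2 + 4 * (d + α₂)) (hω0 : ω ≠ 0) :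
    ∀ k : ℕ, 1 ≤ k →
      φ (g ^ k)
        = 1 / ω * ((α₁ + ω) / 2) ^ (k - 1) * (α₁ * ((α₁ + ω) / 2) + α₂)
          - 1 / ω * ((α₁ - ω) / 2) ^ (k - 1) * (α₁ * ((α₁ - ω) / 2) + α₂) :=
  stmt17_general φ x₁ x₂ hbool a b g hg d α₁ α₂ ω hd hα₁ hα₂ hω hω0
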